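/- Let A and B contain respectively the rigid and non-rigid connected components of a graph G, and let k be the number of isomorphism classes among the components in A. Then Fix(G) = Σ_{Y ∈ B} Fix(Y) + |A| − k. -/

import Mathlib

open SimpleGraph

/-- `φ` is a distinguishing labeling of `G`: the only automorphism preserving `φ` is the identity. -/
def IsDist {V α : Type*} (G : SimpleGraph V) (φ : V → α) : Prop :=
  ∀ π : G ≃g G, (∀ v, φ (π v) = φ v) → ∀ v, π v = v

/-- The distinguishing number `D(G)`. -/
noncomputable def distNum {V : Type*} (G : SimpleGraph V) : ℕ :=
  sInf {c : ℕ | ∃ φ : V → Fin c, IsDist G φ}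

/-- `S` is a fixing set of `G`. -/
def IsFixingSet {V : Type*} (G : SimpleGraph V) (S : Set V) : Prop :=
  ∀ π : G ≃g G, (∀ v ∈ S, π v = v) → ∀ v, π v = v

/-- The fixing number `Fix(G)`. -/
noncomputable def fixNum {V : Type*} (G : SimpleGraph V) : ℕ :=
  sInf {n : ℕ | ∃ S : Set V, S.ncard = n ∧ IsFixingSet G S}

/-- `D(G, c)`: the number of pairwise inequivalent distinguishing labelings of `G`
using at most `c` colors. -/
noncomputable def countDist {V : Type*} (G : SimpleGraph V) (c : ℕ) : ℕ :=
  Nat.card (Quot (fun φ ψ : {φ : V → Fin c // IsDist G φ} =>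
    ∃ π : G ≃g G, ∀ v, φ.1 v = ψ.1 (π v)))

/-- The disjoint union of `r` copies of `G`. -/
def copies {V : Type*} (r : ℕ) (G : SimpleGraph V) : SimpleGraph (Fin r × V) where
  Adj x y := x.1 = y.1 ∧ G.Adj x.2 y.2
  symm := by
    constructor
    rintro ⟨i, u⟩ ⟨j, v⟩ ⟨h1, h2⟩
    exact ⟨h1.symm, h2.symm⟩
  loopless := by
    constructor
    rintro ⟨i, u⟩ ⟨-, h⟩
    exact G.loopless.irrefl u h


/-!
An automorphism of `G` permutes the connected components, carrying each one onto an isomorphic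
one. Hence `S` is a fixing set of `G` exactly when its trace on every component `c` is a fixing
set of `c` and no two distinct isomorphic components both miss `S`: otherwise the automorphism
swapping them fixes `S`. So a fixing set contains a fixing set of every non-rigid component and
meets all rigid components but at most one per isomorphism class; conversely, minimum fixing sets
of the non-rigid components together with one vertex of every rigid component except one
representative per class form a fixing set.
-/

open scoped Classical

namespace SimpleGraph

variable {V : Type*} {G : SimpleGraph V}

def IsRigid (G : SimpleGraph V) : Prop :=
  ∀ e : G ≃g G, ∀ v, e v = v

def rigidComponents (G : SimpleGraph V) : Set G.ConnectedComponent :=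
  {c | (G.induce c.supp).IsRigid}

abbrev RigidComponentClasses (G : SimpleGraph V) : Type _ :=
  Quot fun x y : G.rigidComponents => Nonempty (G.induce x.1.supp ≃g G.induce y.1.supp)

theorem equivalence_nonempty_iso {ι : Type*} {W : ι → Type*} (H : ∀ i, SimpleGraph (W i)) :
    Equivalence fun i j => Nonempty (H i ≃g H j) :=
  ⟨fun _ => ⟨Iso.refl⟩, fun ⟨f⟩ => ⟨f.symm⟩, fun ⟨f⟩ ⟨g⟩ => ⟨f.trans g⟩⟩

namespace Iso

def ofPerm (σ : Equiv.Perm V) (h : ∀ {a b}, G.Adj a b → G.Adj (σ a) (σ b))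
    (h' : ∀ {a b}, G.Adj a b → G.Adj (σ.symm a) (σ.symm b)) : G ≃g G where
  toEquiv := σ
  map_rel_iff' := ⟨fun hab => by simpa using h' hab, h⟩

theorem apply_mem_supp_connectedComponentEquiv_iff (π : G ≃g G) {c : G.ConnectedComponent}
    {v : V} : π v ∈ (π.connectedComponentEquiv c).supp ↔ v ∈ c.supp :=
  ConnectedComponent.iso_image_comp_eq_map_iff_eq_comp

def restrictSupp (π : G ≃g G) {c d : G.ConnectedComponent}
    (h : π.connectedComponentEquiv c = d) : G.induce c.supp ≃g G.induce d.supp where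
  toEquiv := π.toEquiv.subtypeEquiv fun _ => by
    rw [← h]
    exact π.apply_mem_supp_connectedComponentEquiv_iff.symm
  map_rel_iff' := π.map_rel_iff

variable {c d : G.ConnectedComponent}

theorem adj_ofSubtype (e : G.induce c.supp ≃g G.induce c.supp) {a b : V} (hab : G.Adj a b) :
    G.Adj (Equiv.Perm.ofSubtype e.toEquiv a) (Equiv.Perm.ofSubtype e.toEquiv b) := by
  by_cases ha : a ∈ c.supp
  · have hb := (c.mem_supp_congr_adj hab).1 ha
    rw [Equiv.Perm.ofSubtype_apply_of_mem _ ha, Equiv.Perm.ofSubtype_apply_of_mem _ hb]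
    exact e.map_adj_iff.2 hab
  · have hb := mt (c.mem_supp_congr_adj hab).2 ha
    rwa [Equiv.Perm.ofSubtype_apply_of_not_mem _ ha, Equiv.Perm.ofSubtype_apply_of_not_mem _ hb]

noncomputable def extendSupp (e : G.induce c.supp ≃g G.induce c.supp) : G ≃g G :=
  ofPerm (Equiv.Perm.ofSubtype e.toEquiv) (adj_ofSubtype e) fun hab => by
    have h := adj_ofSubtype e.symm hab
    rwa [show e.symm.toEquiv = e.toEquiv⁻¹ from rfl, map_inv] at h

theorem extendSupp_apply_of_mem (e : G.induce c.supp ≃g G.induce c.supp) {v : V}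
    (hv : v ∈ c.supp) : extendSupp e v = e ⟨v, hv⟩ :=
  Equiv.Perm.ofSubtype_apply_of_mem _ hv

theorem extendSupp_apply_of_notMem (e : G.induce c.supp ≃g G.induce c.supp) {v : V}
    (hv : v ∉ c.supp) : extendSupp e v = v :=
  Equiv.Perm.ofSubtype_apply_of_not_mem _ hv

noncomputable def swapSuppFun (f : G.induce c.supp ≃g G.induce d.supp) (v : V) : V :=
  if h : v ∈ c.supp then f ⟨v, h⟩ else if h' : v ∈ d.supp then f.symm ⟨v, h'⟩ else v

theorem swapSuppFun_involutive (hcd : c ≠ d) (f : G.induce c.supp ≃g G.induce d.supp) :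
    Function.Involutive (swapSuppFun f) := by
  have hdisj := Set.disjoint_left.1 (G.pairwise_disjoint_supp_connectedComponent hcd)
  intro v
  by_cases hc : v ∈ c.supp
  · have hfc : (f ⟨v, hc⟩ : V) ∉ c.supp := fun h => hdisj h (f ⟨v, hc⟩).2
    simp [swapSuppFun, hc, hfc]
  by_cases hd : v ∈ d.supp
  · simp [swapSuppFun, hc, hd]
  · simp [swapSuppFun, hc, hd]

theorem adj_swapSuppFun (f : G.induce c.supp ≃g G.induce d.supp) {a b : V}
    (hab : G.Adj a b) : G.Adj (swapSuppFun f a) (swapSuppFun f b) := by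
  have hc := c.mem_supp_congr_adj hab
  have hd := d.mem_supp_congr_adj hab
  by_cases ha : a ∈ c.supp
  · simpa [swapSuppFun, ha, hc.1 ha] using
      (f.map_adj_iff (v := ⟨a, ha⟩) (w := ⟨b, hc.1 ha⟩)).2 hab
  by_cases ha' : a ∈ d.supp
  · simpa [swapSuppFun, ha, ha', mt hc.2 ha, hd.1 ha'] using
      (f.symm.map_adj_iff (v := ⟨a, ha'⟩) (w := ⟨b, hd.1 ha'⟩)).2 hab
  · simpa [swapSuppFun, ha, ha', ← hc, ← hd] using hab

noncomputable def swapSupp (hcd : c ≠ d) (f : G.induce c.supp ≃g G.induce d.supp) : G ≃g G :=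
  ofPerm ((swapSuppFun_involutive hcd f).toPerm _) (adj_swapSuppFun f) (adj_swapSuppFun f)

theorem swapSupp_apply_of_mem (hcd : c ≠ d) (f : G.induce c.supp ≃g G.induce d.supp) {v : V}
    (hv : v ∈ c.supp) : swapSupp hcd f v = f ⟨v, hv⟩ :=
  dif_pos hv

theorem swapSupp_apply_of_notMem (hcd : c ≠ d) (f : G.induce c.supp ≃g G.induce d.supp)
    {v : V} (hc : v ∉ c.supp) (hd : v ∉ d.supp) : swapSupp hcd f v = v := by
  simp [swapSupp, ofPerm, swapSuppFun, hc, hd]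

end Iso

end SimpleGraph

open SimpleGraph

section FixingSets

variable {V : Type*} {G : SimpleGraph V} {S T : Set V}

theorem isFixingSet_univ (G : SimpleGraph V) : IsFixingSet G Set.univ :=
  fun _ h v => h v trivial

theorem IsFixingSet.mono (hS : IsFixingSet G S) (hST : S ⊆ T) : IsFixingSet G T :=
  fun π hπ => hS π fun v hv => hπ v (hST hv)

theorem SimpleGraph.IsRigid.isFixingSet (hG : G.IsRigid) (S : Set V) : IsFixingSet G S :=
  fun π _ => hG π

theorem IsFixingSet.isRigid (hS : IsFixingSet G ∅) : G.IsRigid :=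
  fun π => hS π fun _ h => h.elim

theorem IsFixingSet.induce_supp (hS : IsFixingSet G S) (c : G.ConnectedComponent) :
    IsFixingSet (G.induce c.supp) (Subtype.val ⁻¹' S) := by
  intro e he x
  have hext : ∀ v, Iso.extendSupp e v = v := hS _ fun s hs => by
    by_cases hsc : s ∈ c.supp
    · rw [Iso.extendSupp_apply_of_mem e hsc, he ⟨s, hsc⟩ hs]
    · exact Iso.extendSupp_apply_of_notMem e hsc
  exact Subtype.ext ((Iso.extendSupp_apply_of_mem e x.2).symm.trans (hext x))

theorem IsFixingSet.eq_of_disjoint_supp (hS : IsFixingSet G S) {c d : G.ConnectedComponent}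
    (hc : Disjoint S c.supp) (hd : Disjoint S d.supp) (f : G.induce c.supp ≃g G.induce d.supp) :
    c = d := by
  by_contra hcd
  obtain ⟨v, hv⟩ := c.nonempty_supp
  have hfix := hS (Iso.swapSupp hcd f) (fun s hs => Iso.swapSupp_apply_of_notMem hcd f
    (Set.disjoint_left.1 hc hs) (Set.disjoint_left.1 hd hs)) v
  rw [Iso.swapSupp_apply_of_mem hcd f hv] at hfix
  exact Set.disjoint_left.1 (G.pairwise_disjoint_supp_connectedComponent hcd) hv
    (hfix ▸ (f ⟨v, hv⟩).2)

theorem IsFixingSet.of_induce_supp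
    (hS : ∀ c : G.ConnectedComponent, IsFixingSet (G.induce c.supp) (Subtype.val ⁻¹' S))
    (hiso : ∀ c d : G.ConnectedComponent, Disjoint S c.supp → Disjoint S d.supp →
      Nonempty (G.induce c.supp ≃g G.induce d.supp) → c = d) :
    IsFixingSet G S := by
  intro π hπ
  have hcomp : ∀ c, π.connectedComponentEquiv c = c := by
    intro c
    have hmem : ∀ s ∈ S, s ∈ (π.connectedComponentEquiv c).supp ↔ s ∈ c.supp := fun s hs => by
      simpa only [hπ s hs] using π.apply_mem_supp_connectedComponentEquiv_iff (v := s)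
    by_cases hc : Disjoint S c.supp
    · refine (hiso _ _ hc ?_ ⟨π.restrictSupp rfl⟩).symm
      exact Set.disjoint_left.2 fun s hs h => Set.disjoint_left.1 hc hs ((hmem s hs).1 h)
    · obtain ⟨s, hs, hsc⟩ := Set.not_disjoint_iff.1 hc
      exact ConnectedComponent.eq_of_common_vertex ((hmem s hs).2 hsc) hsc
  intro v
  exact congrArg Subtype.val (hS _ (π.restrictSupp (hcomp (G.connectedComponentMk v)))
    (fun x hx => Subtype.ext (hπ x hx)) ⟨v, rfl⟩)

theorem isFixingSet_iff_induce_supp :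
    IsFixingSet G S ↔
      (∀ c : G.ConnectedComponent, IsFixingSet (G.induce c.supp) (Subtype.val ⁻¹' S)) ∧
      ∀ c d : G.ConnectedComponent, Disjoint S c.supp → Disjoint S d.supp →
        Nonempty (G.induce c.supp ≃g G.induce d.supp) → c = d :=
  ⟨fun hS => ⟨hS.induce_supp, fun _ _ hc hd ⟨f⟩ => hS.eq_of_disjoint_supp hc hd f⟩,
    fun ⟨hS, hiso⟩ => IsFixingSet.of_induce_supp hS hiso⟩

theorem isFixingSet_biUnion_union_image {F : ∀ c : G.ConnectedComponent, Set c.supp}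
    (hF : ∀ c, IsFixingSet (G.induce c.supp) (F c)) {R : Set G.ConnectedComponent}
    (hR : ∀ c ∈ R, ∀ d ∈ R, Nonempty (G.induce c.supp ≃g G.induce d.supp) → c = d)
    {w : G.ConnectedComponent → V} (hw : ∀ c, w c ∈ c.supp) :
    IsFixingSet G ((⋃ c ∈ G.rigidComponentsᶜ, Subtype.val '' F c) ∪
      w '' (G.rigidComponents \ R)) := by
  set S := (⋃ c ∈ G.rigidComponentsᶜ, Subtype.val '' F c) ∪ w '' (G.rigidComponents \ R)
  have hFS : ∀ c ∉ G.rigidComponents, F c ⊆ Subtype.val ⁻¹' S :=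
    fun c hc x hx => Or.inl (Set.mem_biUnion hc ⟨x, hx, rfl⟩)
  have hmissed : ∀ c, Disjoint S c.supp → c ∈ R := by
    intro c hc
    by_cases hcA : c ∈ G.rigidComponents
    · by_contra hcR
      exact Set.disjoint_left.1 hc (Or.inr ⟨c, ⟨hcA, hcR⟩, rfl⟩) (hw c)
    · obtain ⟨x, hx⟩ := (Set.nonempty_iff_ne_empty (s := F c)).2 fun h => hcA (by
        have hFc := hF c
        rw [h] at hFc
        exact hFc.isRigid)
      exact absurd x.2 (Set.disjoint_left.1 hc (hFS c hcA hx))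
  refine isFixingSet_iff_induce_supp.2 ⟨fun c => ?_, fun c d hc hd => ?_⟩
  · by_cases hcA : c ∈ G.rigidComponents
    · exact IsRigid.isFixingSet hcA _
    · exact (hF c).mono (hFS c hcA)
  · exact hR c (hmissed c hc) d (hmissed d hd)

theorem IsFixingSet.fixNum_le (hS : IsFixingSet G S) : fixNum G ≤ S.ncard :=
  Nat.sInf_le ⟨S, rfl, hS⟩

theorem exists_isFixingSet_ncard_eq_fixNum (G : SimpleGraph V) :
    ∃ S, IsFixingSet G S ∧ S.ncard = fixNum G := by
  obtain ⟨S, hcard, hS⟩ : fixNum G ∈ {n | ∃ S : Set V, S.ncard = n ∧ IsFixingSet G S} :=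
    Nat.sInf_mem ⟨_, Set.univ, rfl, isFixingSet_univ G⟩
  exact ⟨S, hS, hcard⟩

theorem le_fixNum {n : ℕ} (h : ∀ S, IsFixingSet G S → n ≤ S.ncard) : n ≤ fixNum G :=
  le_csInf ⟨_, Set.univ, rfl, isFixingSet_univ G⟩ fun _ ⟨S, hcard, hS⟩ => hcard ▸ h S hS

theorem IsFixingSet.fixNum_induce_supp_le (hS : IsFixingSet G S) (c : G.ConnectedComponent) :
    fixNum (G.induce c.supp) ≤ (S ∩ c.supp).ncard := by
  have h := IsFixingSet.fixNum_le (hS.induce_supp c)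
  rwa [← Set.ncard_image_of_injective _ Subtype.val_injective, Subtype.image_preimage_coe,
    Set.inter_comm] at h

end FixingSets

section Counting

variable {V : Type*} [Finite V] {G : SimpleGraph V} {S : Set V}

theorem finsum_ncard_inter_supp (S : Set V) (C : Set G.ConnectedComponent) :
    ∑ᶠ c ∈ C, (S ∩ c.supp).ncard = (S ∩ G.connectedComponentMk ⁻¹' C).ncard := by
  rw [← C.toFinite.ncard_biUnion (s := fun c => S ∩ c.supp) (fun _ _ => Set.toFinite _)
    fun c _ d _ hcd =>
      (G.pairwise_disjoint_supp_connectedComponent hcd).mono inf_le_right inf_le_right]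
  congr 1
  ext v
  simp [ConnectedComponent.mem_supp_iff]

theorem IsFixingSet.finsum_fixNum_le (hS : IsFixingSet G S) (C : Set G.ConnectedComponent) :
    ∑ᶠ c ∈ C, fixNum (G.induce c.supp) ≤ (S ∩ G.connectedComponentMk ⁻¹' C).ncard := by
  rw [← finsum_ncard_inter_supp, finsum_mem_eq_finite_toFinset_sum _ C.toFinite,
    finsum_mem_eq_finite_toFinset_sum _ C.toFinite]
  exact Finset.sum_le_sum fun c _ => hS.fixNum_induce_supp_le c

theorem IsFixingSet.ncard_rigidComponents_sub_le (hS : IsFixingSet G S) :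
    G.rigidComponents.ncard - Nat.card G.RigidComponentClasses
      ≤ (S ∩ G.connectedComponentMk ⁻¹' G.rigidComponents).ncard := by
  set A := G.rigidComponents
  set E := {c ∈ A | Disjoint S c.supp}
  have hE : E.ncard ≤ Nat.card G.RigidComponentClasses := by
    rw [← Nat.card_coe_set_eq]
    refine Nat.card_le_card_of_injective (fun c : E => Quot.mk _ ⟨c.1, c.2.1⟩) ?_
    rintro ⟨c, _, hc⟩ ⟨d, _, hd⟩ h
    obtain ⟨f⟩ := ((equivalence_nonempty_iso fun x : A => G.induce x.1.supp).eqvGen_iff).1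
      (Quot.eqvGen_exact h)
    exact Subtype.ext (hS.eq_of_disjoint_supp hc hd f)
  calc A.ncard - Nat.card G.RigidComponentClasses ≤ A.ncard - E.ncard :=
        Nat.sub_le_sub_left hE _
    _ ≤ (A \ E).ncard := Set.le_ncard_sdiff _ _
    _ ≤ (G.connectedComponentMk '' (S ∩ G.connectedComponentMk ⁻¹' A)).ncard := by
      refine Set.ncard_le_ncard ?_
      rintro c ⟨hcA, hcE⟩
      obtain ⟨v, hvS, rfl⟩ := Set.not_disjoint_iff.1 fun h => hcE ⟨hcA, h⟩
      exact ⟨v, ⟨hvS, hcA⟩, rfl⟩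
    _ ≤ _ := Set.ncard_image_le

theorem IsFixingSet.finsum_fixNum_add_le_ncard (hS : IsFixingSet G S) :
    ∑ᶠ c ∈ G.rigidComponentsᶜ, fixNum (G.induce c.supp)
        + (G.rigidComponents.ncard - Nat.card G.RigidComponentClasses) ≤ S.ncard := by
  have hsplit := Set.ncard_inter_add_ncard_sdiff_eq_ncard S
    (G.connectedComponentMk ⁻¹' G.rigidComponentsᶜ)
  rw [Set.preimage_compl, Set.sdiff_compl] at hsplit
  exact hsplit ▸ add_le_add (hS.finsum_fixNum_le _) hS.ncard_rigidComponents_sub_le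

theorem fixNum_le_finsum_add (G : SimpleGraph V) :
    fixNum G ≤ ∑ᶠ c ∈ G.rigidComponentsᶜ, fixNum (G.induce c.supp)
      + (G.rigidComponents.ncard - Nat.card G.RigidComponentClasses) := by
  choose F hF hFcard using fun c : G.ConnectedComponent =>
    exists_isFixingSet_ncard_eq_fixNum (G.induce c.supp)
  set R := Set.range fun q : G.RigidComponentClasses => q.out.1
  have hRA : R ⊆ G.rigidComponents := by
    rintro _ ⟨q, rfl⟩
    exact q.out.2
  have hR : ∀ c ∈ R, ∀ d ∈ R, Nonempty (G.induce c.supp ≃g G.induce d.supp) → c = d := by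
    rintro _ ⟨q, rfl⟩ _ ⟨q', rfl⟩ ⟨f⟩
    rw [show q = q' from (Quot.out_eq q).symm.trans ((Quot.sound ⟨f⟩).trans (Quot.out_eq q'))]
  have hRcard : R.ncard = Nat.card G.RigidComponentClasses :=
    Set.ncard_range_of_injective
      (Subtype.val_injective.comp (Function.LeftInverse.injective Quot.out_eq))
  set w : G.ConnectedComponent → V := fun c => c.nonempty_supp.some
  calc fixNum G
      ≤ ((⋃ c ∈ G.rigidComponentsᶜ, Subtype.val '' F c) ∪ w '' (G.rigidComponents \ R)).ncard :=
        (isFixingSet_biUnion_union_image hF hR fun c => c.nonempty_supp.some_mem).fixNum_le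
    _ ≤ ∑ᶠ c ∈ G.rigidComponentsᶜ, (Subtype.val '' F c).ncard
          + (G.rigidComponents \ R).ncard :=
        (Set.ncard_union_le _ _).trans
          (add_le_add ((Set.toFinite _).ncard_biUnion_le _) Set.ncard_image_le)
    _ = _ := by
        rw [Set.ncard_sdiff hRA, hRcard]
        congr 1
        exact finsum_mem_congr rfl fun c _ =>
          (Set.ncard_image_of_injective _ Subtype.val_injective).trans (hFcard c)

end Counting

/-- Erwin–Harary: `Fix(G)` equals the sum of the fixing numbers of the non-rigid components,
plus the number of rigid components minus the number of their isomorphism classes. -/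
theorem fix_components {V : Type*} [Fintype V] (G : SimpleGraph V) :
    fixNum G =
      (∑ᶠ c ∈ {c : G.ConnectedComponent |
          ¬ ∀ e : (G.induce c.supp) ≃g (G.induce c.supp), ∀ v, e v = v},
        fixNum (G.induce c.supp))
      + Nat.card {c : G.ConnectedComponent |
          ∀ e : (G.induce c.supp) ≃g (G.induce c.supp), ∀ v, e v = v}
      - Nat.card (Quot (fun x y : {c : G.ConnectedComponent //
            ∀ e : (G.induce c.supp) ≃g (G.induce c.supp), ∀ v, e v = v} =>
          Nonempty ((G.induce x.1.supp) ≃g (G.induce y.1.supp)))) := by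
  change fixNum G = ∑ᶠ c ∈ G.rigidComponentsᶜ, fixNum (G.induce c.supp)
    + Nat.card G.rigidComponents - Nat.card G.RigidComponentClasses
  have hk : Nat.card G.RigidComponentClasses ≤ Nat.card G.rigidComponents :=
    Nat.card_le_card_of_surjective _ Quot.mk_surjective
  rw [Nat.add_sub_assoc hk, Nat.card_coe_set_eq]
  exact le_antisymm (fixNum_le_finsum_add G) (le_fixNum fun S hS => hS.finsum_fixNum_add_le_ncard)
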